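/- If (x(t), y(t), z(t)) is a solution of X₁ = (yz X₀₁∘φ, xz X₀₂∘φ, xy X₀₃∘φ) remaining in a fixed open octant, then after the time reparametrization with ds/dt = 2 x(t) y(t) z(t) · sign, the curve φ(x, y, z) solves the system given by X₀; hence orbits of X₁ in each octant are mapped by φ to orbits of X₀ in (−1, ∞)³. -/

import Mathlib

/-!
Along a solution, $\frac{d}{dt}(x^2 - 1) = 2xyz\,X_{01}\circ\varphi$, and likewise for $y$ and $z$:
each coordinate of $\varphi$ picks up the common factor $2xyz$, which does not vanish in an open
octant. Dividing it out by the reparametrization $ds/dt = 2\,xyz \cdot \mathrm{sign}$ leaves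
$\mathrm{sign}\cdot X_0\circ\varphi$, since $\mathrm{sign}^{-1} = \mathrm{sign}$.
-/

theorem hasDerivAt_sq_sub_one_comp_of_mul_eq {w σ : ℝ → ℝ} {a F P s τ : ℝ}
    (hs : s * s = 1) (hP : P ≠ 0) (haP : w (σ τ) * a = P)
    (hw : HasDerivAt w (a * F) (σ τ)) (hσ : HasDerivAt σ (1 / (2 * s * P)) τ) :
    HasDerivAt (fun u => w (σ u) ^ 2 - 1) (s * F) τ := by
  refine (((hw.comp τ hσ).fun_pow 2).sub_const 1).congr_deriv ?_
  have hs0 : s ≠ 0 := left_ne_zero_of_mul_eq_one hs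
  subst haP
  have hw0 : w (σ τ) ≠ 0 := left_ne_zero_of_mul hP
  have ha0 : a ≠ 0 := right_ne_zero_of_mul hP
  rw [Function.comp_apply]
  field_simp
  linear_combination -2 * w (σ τ) * F * hs

theorem orbits_mapped_by_phi (X01 X02 X03 : ℝ → ℝ → ℝ → ℝ)
    (x y z σ : ℝ → ℝ) (sgn : ℝ) (hsgn : sgn = 1 ∨ sgn = -1)
    (hoct : ∀ t, 0 < sgn * (x t * y t * z t))
    (hx : ∀ t, HasDerivAt x
      (y t * z t * X01 (x t ^ 2 - 1) (y t ^ 2 - 1) (z t ^ 2 - 1)) t)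
    (hy : ∀ t, HasDerivAt y
      (x t * z t * X02 (x t ^ 2 - 1) (y t ^ 2 - 1) (z t ^ 2 - 1)) t)
    (hz : ∀ t, HasDerivAt z
      (x t * y t * X03 (x t ^ 2 - 1) (y t ^ 2 - 1) (z t ^ 2 - 1)) t)
    (hσ : ∀ τ, HasDerivAt σ
      (1 / (2 * sgn * (x (σ τ) * y (σ τ) * z (σ τ)))) τ) :
    ∀ τ, HasDerivAt (fun u => x (σ u) ^ 2 - 1)
        (sgn * X01 (x (σ τ) ^ 2 - 1) (y (σ τ) ^ 2 - 1) (z (σ τ) ^ 2 - 1)) τ ∧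
      HasDerivAt (fun u => y (σ u) ^ 2 - 1)
        (sgn * X02 (x (σ τ) ^ 2 - 1) (y (σ τ) ^ 2 - 1) (z (σ τ) ^ 2 - 1)) τ ∧
      HasDerivAt (fun u => z (σ u) ^ 2 - 1)
        (sgn * X03 (x (σ τ) ^ 2 - 1) (y (σ τ) ^ 2 - 1) (z (σ τ) ^ 2 - 1)) τ := by
  intro τ
  have hsgn_sq : sgn * sgn = 1 := by rcases hsgn with rfl | rfl <;> norm_num
  have hxyz : x (σ τ) * y (σ τ) * z (σ τ) ≠ 0 := right_ne_zero_of_mul (hoct (σ τ)).ne'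
  refine ⟨?_, ?_, ?_⟩
  · exact hasDerivAt_sq_sub_one_comp_of_mul_eq hsgn_sq hxyz (by ring) (hx _) (hσ τ)
  · exact hasDerivAt_sq_sub_one_comp_of_mul_eq hsgn_sq hxyz (by ring) (hy _) (hσ τ)
  · exact hasDerivAt_sq_sub_one_comp_of_mul_eq hsgn_sq hxyz (by ring) (hz _) (hσ τ)
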